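/- arXiv:1507.00492 — 2 statements merged into one kernel-verified Lean document; each statement's English description precedes it below -/
import Mathlib

section
/- Let 𝒜 be a compact IRU-set of strictly positive N×N matrices. Then for every n ≥ 1 and every choice of matrices A_1, …, A_n ∈ 𝒜, one has ρ(A_n ⋯ A_1) ≤ (max_{A∈𝒜} ρ(A))^n. -/
/-!
Among all triples `(B, w, s)` with `B ∈ S`, `w` a probability vector and `s • w ≤ B *ᵥ w`,
compactness gives one `(B̂, v, λ)` with maximal `s`. Because rows can be chosen independently, `v`
is a common sub-eigenvector: if some `B ∈ S` had `(B *ᵥ v) i > λ v i`, replacing row `i` of `B̂` by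
that of `B` and applying the positive matrix once more would produce a larger admissible `s`.
Hence `B̂ *ᵥ v = λ • v` with `v > 0`, so `λ ≤ ρ(B̂)`, while every product `P` of `n` matrices
of `S` satisfies `P *ᵥ v ≤ λⁿ • v`, which forces `ρ(P) ≤ λⁿ`.
-/

open Matrix

/-- Spectral radius of a real square matrix: the maximum modulus of its
(complex) eigenvalues, i.e. of the roots of the characteristic polynomial of
its complexification. -/
noncomputable def specRad {N : ℕ} (A : Matrix (Fin N) (Fin N) ℝ) : ℝ :=
  sSup {r : ℝ | ∃ μ : ℂ, (A.map Complex.ofReal).charpoly.IsRoot μ ∧ r = ‖μ‖}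

/-- An independent row uncertainty (IRU) set of matrices: the set of all
matrices whose `i`-th row belongs to a prescribed set of rows `rows i`. -/
def IsIRU {N M : ℕ} (S : Set (Matrix (Fin N) (Fin M) ℝ)) : Prop :=
  ∃ rows : Fin N → Set (Fin M → ℝ), S = {A | ∀ i, A i ∈ rows i}

open Module End Polynomial

theorem exists_gt_smul_le_of_forall_mul_lt {ι : Type*} [Fintype ι] [Nonempty ι] {u x : ι → ℝ}
    (hu : ∀ i, 0 < u i) {t : ℝ} (h : ∀ i, t * u i < x i) : ∃ s > t, s • u ≤ x := by
  obtain ⟨i₀, -, hi₀⟩ := Finset.univ.exists_min_image (fun i => x i / u i) Finset.univ_nonempty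
  refine ⟨x i₀ / u i₀, (lt_div_iff₀ (hu i₀)).mpr (h i₀), fun i => ?_⟩
  simpa [le_div_iff₀ (hu i)] using hi₀ i (Finset.mem_univ i)

namespace Matrix

variable {ι : Type*} [Fintype ι]

theorem isRoot_charpoly_iff_exists_mulVec_eq_smul {K : Type*} [Field K] [DecidableEq ι]
    (A : Matrix ι ι K) (μ : K) :
    A.charpoly.IsRoot μ ↔ ∃ v, v ≠ 0 ∧ A *ᵥ v = μ • v := by
  rw [← charpoly_toLin', ← hasEigenvalue_iff_isRoot_charpoly]
  constructor
  · intro h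
    obtain ⟨v, hv⟩ := h.exists_hasEigenvector
    exact ⟨v, hv.2, by simpa using hv.apply_eq_smul⟩
  · rintro ⟨v, hv, h⟩
    exact hasEigenvalue_of_hasEigenvector ⟨by simpa [mem_eigenspace_iff] using h, hv⟩

theorem mulVec_le_mulVec {B : Matrix ι ι ℝ} (hB : ∀ i j, 0 ≤ B i j) {v w : ι → ℝ}
    (h : v ≤ w) : B *ᵥ v ≤ B *ᵥ w :=
  fun i => Finset.sum_le_sum fun j _ => mul_le_mul_of_nonneg_left (h j) (hB i j)

theorem mulVec_nonneg {B : Matrix ι ι ℝ} (hB : ∀ i j, 0 ≤ B i j) {v : ι → ℝ} (hv : 0 ≤ v) :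
    0 ≤ B *ᵥ v :=
  fun i => Finset.sum_nonneg fun j _ => mul_nonneg (hB i j) (hv j)

theorem mulVec_pos {B : Matrix ι ι ℝ} (hB : ∀ i j, 0 < B i j) {v : ι → ℝ} (hv : 0 ≤ v)
    (hv0 : v ≠ 0) (i : ι) : 0 < (B *ᵥ v) i := by
  obtain ⟨k, hk⟩ := Function.ne_iff.mp hv0
  exact Finset.sum_pos' (fun j _ => mul_nonneg (hB i j).le (hv j))
    ⟨k, Finset.mem_univ k, mul_pos (hB i k) ((hv k).lt_of_ne' hk)⟩

theorem list_prod_mulVec_le_pow_smul [DecidableEq ι] {v : ι → ℝ} {t : ℝ} (ht : 0 ≤ t)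
    (L : List (Matrix ι ι ℝ)) (hL : ∀ M ∈ L, (∀ i j, 0 ≤ M i j) ∧ M *ᵥ v ≤ t • v) :
    L.prod *ᵥ v ≤ t ^ L.length • v := by
  induction L with
  | nil => simp
  | cons M L ih =>
    obtain ⟨hM, hMv⟩ := hL M List.mem_cons_self
    calc (M :: L).prod *ᵥ v = M *ᵥ (L.prod *ᵥ v) := by rw [List.prod_cons, mulVec_mulVec]
    _ ≤ M *ᵥ (t ^ L.length • v) :=
        mulVec_le_mulVec hM (ih fun M' hM' => hL M' (List.mem_cons_of_mem M hM'))
    _ = t ^ L.length • M *ᵥ v := mulVec_smul _ _ _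
    _ ≤ t ^ L.length • t • v := smul_le_smul_of_nonneg_left hMv (pow_nonneg ht _)
    _ = t ^ (M :: L).length • v := by rw [smul_smul, ← pow_succ, List.length_cons]

theorem list_prod_nonneg [DecidableEq ι] (L : List (Matrix ι ι ℝ))
    (hL : ∀ M ∈ L, ∀ i j, 0 ≤ M i j) :
    ∀ i j, 0 ≤ L.prod i j := by
  induction L with
  | nil => intro i j; by_cases h : i = j <;> simp [h]
  | cons M L ih =>
    intro i j
    rw [List.prod_cons, mul_apply]
    exact Finset.sum_nonneg fun k _ => mul_nonneg (hL M List.mem_cons_self i k)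
      (ih (fun M' hM' => hL M' (List.mem_cons_of_mem M hM')) k j)

theorem le_of_smul_le_mulVec_of_mulVec_le_smul {P : Matrix ι ι ℝ} (hP : ∀ i j, 0 ≤ P i j)
    {v w : ι → ℝ} (hv : ∀ i, 0 < v i) (hw : 0 ≤ w) (hw0 : w ≠ 0) {r t : ℝ}
    (hrw : r • w ≤ P *ᵥ w) (hPv : P *ᵥ v ≤ t • v) : r ≤ t := by
  obtain ⟨k, hk⟩ := Function.ne_iff.mp hw0
  obtain ⟨i₀, -, hi₀⟩ := Finset.univ.exists_max_image (fun i => w i / v i) ⟨k, Finset.mem_univ k⟩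
  set c := w i₀ / v i₀
  have hwc : w ≤ c • v := fun j => by
    simpa [div_le_iff₀ (hv j)] using hi₀ j (Finset.mem_univ j)
  have hwi₀ : w i₀ = c * v i₀ := (div_mul_cancel₀ _ (hv i₀).ne').symm
  have hc : 0 < c := (div_pos ((hw k).lt_of_ne' hk) (hv k)).trans_le (hi₀ k (Finset.mem_univ k))
  have key : r * w i₀ ≤ t * w i₀ :=
    calc r * w i₀ ≤ (P *ᵥ w) i₀ := hrw i₀
    _ ≤ (P *ᵥ (c • v)) i₀ := mulVec_le_mulVec hP hwc i₀
    _ = c * (P *ᵥ v) i₀ := by rw [mulVec_smul]; rfl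
    _ ≤ c * (t * v i₀) := mul_le_mul_of_nonneg_left (hPv i₀) hc.le
    _ = t * w i₀ := by rw [hwi₀]; ring
  exact le_of_mul_le_mul_right key (hwi₀ ▸ mul_pos hc (hv i₀))

theorem norm_smul_norm_le_mulVec_norm {P : Matrix ι ι ℝ} (hP : ∀ i j, 0 ≤ P i j) {μ : ℂ}
    {x : ι → ℂ} (hx : P.map Complex.ofReal *ᵥ x = μ • x) :
    ‖μ‖ • (fun i => ‖x i‖) ≤ P *ᵥ fun i => ‖x i‖ := fun i =>
  calc ‖μ‖ * ‖x i‖ = ‖∑ j, (P i j : ℂ) * x j‖ := by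
        rw [← norm_mul, ← smul_eq_mul, ← Pi.smul_apply, ← hx]; rfl
  _ ≤ ∑ j, ‖(P i j : ℂ) * x j‖ := norm_sum_le _ _
  _ = (P *ᵥ fun i => ‖x i‖) i := by
        simp [mulVec, dotProduct, Complex.norm_real, abs_of_nonneg (hP i _)]

theorem exists_mem_stdSimplex_smul_le_mulVec {B : Matrix ι ι ℝ} {u : ι → ℝ} (hu : 0 ≤ u)
    (hu0 : u ≠ 0) {s : ℝ} (h : s • u ≤ B *ᵥ u) :
    ∃ w ∈ stdSimplex ℝ ι, s • w ≤ B *ᵥ w := by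
  have hσ : 0 < ∑ i, u i := by
    obtain ⟨k, hk⟩ := Function.ne_iff.mp hu0
    exact Finset.sum_pos' (fun i _ => hu i) ⟨k, Finset.mem_univ k, (hu k).lt_of_ne' hk⟩
  refine ⟨(∑ i, u i)⁻¹ • u, ⟨fun i => mul_nonneg (inv_nonneg.mpr hσ.le) (hu i), ?_⟩, ?_⟩
  · simp [← Finset.mul_sum, hσ.ne']
  · rw [mulVec_smul, smul_comm]
    exact smul_le_smul_of_nonneg_left h (inv_nonneg.mpr hσ.le)

theorem exists_gt_smul_le_mulVec [Nonempty ι] {B : Matrix ι ι ℝ} (hB : ∀ i j, 0 < B i j)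
    {v : ι → ℝ} (hv : 0 ≤ v) {t : ℝ} (hle : t • v ≤ B *ᵥ v) (hne : t • v ≠ B *ᵥ v) :
    ∃ s > t, ∃ w ∈ stdSimplex ℝ ι, s • w ≤ B *ᵥ w := by
  have hv0 : v ≠ 0 := by rintro rfl; simp at hne
  set u := B *ᵥ v
  have hu : ∀ i, 0 < u i := mulVec_pos hB hv hv0
  -- `B *ᵥ u - t • u = B *ᵥ (B *ᵥ v - t • v)`: a positive matrix applied to a nonzero `≥ 0` vector
  have hBu : ∀ i, t * u i < (B *ᵥ u) i := by
    intro i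
    have hd := mulVec_pos hB (sub_nonneg.mpr hle) (sub_ne_zero.mpr hne.symm) i
    rw [mulVec_sub, mulVec_smul] at hd
    simpa using hd
  obtain ⟨s, hst, hs⟩ := exists_gt_smul_le_of_forall_mul_lt hu hBu
  exact ⟨s, hst, exists_mem_stdSimplex_smul_le_mulVec (fun i => (hu i).le)
    (fun h0 => (hu Classical.ofNonempty).ne' (congrFun h0 _)) hs⟩

end Matrix

theorem specRad_le_of_mulVec_le {N : ℕ} {P : Matrix (Fin N) (Fin N) ℝ} (hP : ∀ i j, 0 ≤ P i j)
    {v : Fin N → ℝ} (hv : ∀ i, 0 < v i) {t : ℝ} (ht : 0 ≤ t) (h : P *ᵥ v ≤ t • v) :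
    specRad P ≤ t := by
  refine Real.sSup_le ?_ ht
  rintro r ⟨μ, hμ, rfl⟩
  obtain ⟨x, hx0, hx⟩ := (isRoot_charpoly_iff_exists_mulVec_eq_smul _ μ).mp hμ
  exact le_of_smul_le_mulVec_of_mulVec_le_smul hP hv (fun i => norm_nonneg (x i))
    (fun h0 => hx0 (funext fun i => norm_eq_zero.mp (congrFun h0 i)))
    (norm_smul_norm_le_mulVec_norm hP hx) h

theorem le_specRad_of_mulVec_eq_smul {N : ℕ} {B : Matrix (Fin N) (Fin N) ℝ} {v : Fin N → ℝ}
    {t : ℝ} (hv : v ≠ 0) (h : B *ᵥ v = t • v) : t ≤ specRad B := by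
  have hroot : (B.map Complex.ofReal).charpoly.IsRoot (t : ℂ) := by
    rw [show B.map Complex.ofReal = B.map Complex.ofRealHom from rfl, charpoly_map]
    exact ((isRoot_charpoly_iff_exists_mulVec_eq_smul B t).mpr ⟨v, hv, h⟩).map
  have hbdd : BddAbove {r : ℝ | ∃ μ : ℂ, (B.map Complex.ofReal).charpoly.IsRoot μ ∧ r = ‖μ‖} :=
    (((finite_setOfPred_isRoot (charpoly_monic _).ne_zero).image (‖·‖)).subset
      (by rintro r ⟨μ, hμ, rfl⟩; exact ⟨μ, hμ, rfl⟩)).bddAbove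
  exact (le_abs_self t).trans (le_csSup hbdd ⟨t, hroot, by simp⟩)

theorem bddAbove_specRad_image {N : ℕ} {S : Set (Matrix (Fin N) (Fin N) ℝ)}
    (hcomp : IsCompact S) (hnonneg : ∀ B ∈ S, ∀ i j, 0 ≤ B i j) : BddAbove (specRad '' S) := by
  obtain ⟨D, hD⟩ := hcomp.bddAbove_image
    (f := fun B : Matrix (Fin N) (Fin N) ℝ => ∑ i, ∑ j, B i j)
    (Continuous.continuousOn (by fun_prop))
  refine ⟨D, ?_⟩
  rintro _ ⟨B, hB, rfl⟩
  have hrow : ∀ i, 0 ≤ ∑ j, B i j := fun i => Finset.sum_nonneg fun j _ => hnonneg B hB i j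
  refine (specRad_le_of_mulVec_le (hnonneg B hB) (v := 1) (fun _ => one_pos)
    (Finset.sum_nonneg fun i _ => hrow i) fun i => ?_).trans (hD ⟨B, hB, rfl⟩)
  simpa [mulVec, dotProduct] using
    Finset.single_le_sum (fun k _ => hrow k) (Finset.mem_univ i)

section subeigenvalues

variable {ι : Type*} [Fintype ι]

/-- By the Collatz–Wielandt formula, the supremum of this set is `⨆ B ∈ S, specRad B` when the
matrices in `S` are positive. -/
def subeigenvalues (S : Set (Matrix ι ι ℝ)) : Set ℝ :=
  {s | ∃ B ∈ S, ∃ w ∈ stdSimplex ℝ ι, s • w ≤ B *ᵥ w}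

theorem zero_mem_subeigenvalues {S : Set (Matrix ι ι ℝ)} {B : Matrix ι ι ℝ} (hB : B ∈ S)
    (hnonneg : ∀ i j, 0 ≤ B i j) {w : ι → ℝ} (hw : w ∈ stdSimplex ℝ ι) :
    0 ∈ subeigenvalues S :=
  ⟨B, hB, w, hw, (zero_smul ℝ w).trans_le (Matrix.mulVec_nonneg hnonneg hw.1)⟩

theorem exists_isGreatest_subeigenvalues [Nonempty ι] {S : Set (Matrix ι ι ℝ)}
    (hcomp : IsCompact S) (hne : S.Nonempty) (hnonneg : ∀ B ∈ S, ∀ i j, 0 ≤ B i j) :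
    ∃ t, IsGreatest (subeigenvalues S) t := by
  classical
  obtain ⟨D, hD⟩ := (hcomp.prod (isCompact_stdSimplex ℝ ι)).bddAbove_image
    (f := fun p : Matrix ι ι ℝ × (ι → ℝ) => ∑ i, (p.1 *ᵥ p.2) i)
    (Continuous.continuousOn (by fun_prop))
  have hsD : ∀ s ∈ subeigenvalues S, s ≤ D := by
    rintro s ⟨B, hB, w, hw, hs⟩
    calc s = ∑ i, s * w i := by rw [← Finset.mul_sum, hw.2, mul_one]
    _ ≤ ∑ i, (B *ᵥ w) i := Finset.sum_le_sum fun i _ => hs i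
    _ ≤ D := hD ⟨(B, w), ⟨hB, hw⟩, rfl⟩
  -- restricting to `s ∈ [0, D]` loses no upper bound and makes the set of witnesses compact
  let T := {p : Matrix ι ι ℝ × (ι → ℝ) × ℝ |
    p.1 ∈ S ∧ p.2.1 ∈ stdSimplex ℝ ι ∧ p.2.2 ∈ Set.Icc 0 D ∧ p.2.2 • p.2.1 ≤ p.1 *ᵥ p.2.1}
  have hT : IsCompact T := by
    have hT' : T = (S ×ˢ stdSimplex ℝ ι ×ˢ Set.Icc 0 D) ∩
        {p | p.2.2 • p.2.1 ≤ p.1 *ᵥ p.2.1} := by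
      ext; simp [T, and_assoc]
    rw [hT']
    exact (hcomp.prod ((isCompact_stdSimplex ℝ ι).prod isCompact_Icc)).inter_right
      (isClosed_le (by fun_prop) (by fun_prop))
  obtain ⟨B₀, hB₀⟩ := hne
  have hw₀ := single_mem_stdSimplex ℝ (Classical.arbitrary ι)
  have h₀ := zero_mem_subeigenvalues hB₀ (hnonneg B₀ hB₀) hw₀
  obtain ⟨⟨B, v, t⟩, ⟨hB, hv, ht, hle⟩, hmax⟩ := hT.exists_isMaxOn
    ⟨(B₀, _, 0), hB₀, hw₀, ⟨le_rfl, hsD 0 h₀⟩,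
      (zero_smul ℝ _).trans_le (Matrix.mulVec_nonneg (hnonneg B₀ hB₀) hw₀.1)⟩
    (continuous_snd.comp continuous_snd).continuousOn
  refine ⟨t, ⟨B, hB, v, hv, hle⟩, fun s hs => ?_⟩
  rcases lt_or_ge s 0 with hs0 | hs0
  · exact hs0.le.trans ht.1
  · obtain ⟨B', hB', w, hw, hsw⟩ := hs
    have hmem : (B', w, s) ∈ T := ⟨hB', hw, ⟨hs0, hsD s ⟨B', hB', w, hw, hsw⟩⟩, hsw⟩
    exact hmax hmem

end subeigenvalues

theorem IsIRU.updateRow_mem {N M : ℕ} {S : Set (Matrix (Fin N) (Fin M) ℝ)} (hS : IsIRU S)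
    {B B' : Matrix (Fin N) (Fin M) ℝ} (hB : B ∈ S) (hB' : B' ∈ S) (i : Fin N) :
    B.updateRow i (B' i) ∈ S := by
  obtain ⟨rows, rfl⟩ := hS
  intro j
  rcases eq_or_ne j i with rfl | hj
  · simpa using hB' j
  · simpa [hj] using hB j

/-- Swapping row `i` of `B` for that of `B'` stays in `S`; if `(B' *ᵥ v) i > t * v i`, the swapped
matrix would have a subeigenvalue above `t`. -/
theorem IsIRU.mulVec_le_of_mem_upperBounds {N : ℕ} {S : Set (Matrix (Fin N) (Fin N) ℝ)}
    (hS : IsIRU S) (hpos : ∀ A ∈ S, ∀ i j, 0 < A i j) {t : ℝ}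
    (ht : t ∈ upperBounds (subeigenvalues S)) {B : Matrix (Fin N) (Fin N) ℝ} (hB : B ∈ S)
    {v : Fin N → ℝ} (hv : v ∈ stdSimplex ℝ (Fin N)) (hle : t • v ≤ B *ᵥ v) :
    ∀ B' ∈ S, B' *ᵥ v ≤ t • v := by
  intro B' hB' i
  by_contra! hi
  have : Nonempty (Fin N) := ⟨i⟩
  have hmem := hS.updateRow_mem hB hB' i
  have hrow : B.updateRow i (B' i) *ᵥ v = Function.update (B *ᵥ v) i ((B' *ᵥ v) i) :=
    Matrix.updateRow_mulVec _ _ _ _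
  have hle' : t • v ≤ B.updateRow i (B' i) *ᵥ v := by
    intro j
    rw [hrow]
    rcases eq_or_ne j i with rfl | hj
    · simpa using hi.le
    · simpa [hj] using hle j
  have hne : t • v ≠ B.updateRow i (B' i) *ᵥ v := fun h =>
    hi.ne (by simpa [hrow] using congrFun h i)
  obtain ⟨s, hst, w, hw, hsw⟩ := Matrix.exists_gt_smul_le_mulVec (hpos _ hmem) hv.1 hle' hne
  exact (ht ⟨_, hmem, w, hw, hsw⟩).not_gt hst

theorem IsIRU.exists_pos_eigenvector_dominating {N : ℕ} [Nonempty (Fin N)]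
    {S : Set (Matrix (Fin N) (Fin N) ℝ)} (hS : IsIRU S) (hcomp : IsCompact S)
    (hne : S.Nonempty) (hpos : ∀ A ∈ S, ∀ i j, 0 < A i j) :
    ∃ B ∈ S, ∃ t : ℝ, 0 ≤ t ∧ ∃ v : Fin N → ℝ,
      (∀ i, 0 < v i) ∧ B *ᵥ v = t • v ∧ ∀ B' ∈ S, B' *ᵥ v ≤ t • v := by
  obtain ⟨t, ⟨B, hB, v, hv, hle⟩, ht⟩ :=
    exists_isGreatest_subeigenvalues hcomp hne fun B hB i j => (hpos B hB i j).le
  have hdom := hS.mulVec_le_of_mem_upperBounds hpos ht hB hv hle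
  have heig : B *ᵥ v = t • v := le_antisymm (hdom B hB) hle
  have ht0 : 0 ≤ t := ht (zero_mem_subeigenvalues hB (fun i j => (hpos B hB i j).le) hv)
  have hv0 : v ≠ 0 := fun h => by simpa [h] using hv.2
  refine ⟨B, hB, t, ht0, v, fun i => ?_, heig, hdom⟩
  have hBv := Matrix.mulVec_pos (hpos B hB) hv.1 hv0 i
  rw [heig] at hBv
  exact pos_of_mul_pos_right hBv ht0

theorem stmt_9_general {N : ℕ} (S : Set (Matrix (Fin N) (Fin N) ℝ)) (hS : IsIRU S)
    (hcomp : IsCompact S) (hne : S.Nonempty) (hpos : ∀ A ∈ S, ∀ i j, 0 < A i j)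
    (n : ℕ) (A : Fin n → Matrix (Fin N) (Fin N) ℝ)
    (hA : ∀ i, A i ∈ S) :
    specRad ((List.ofFn A).reverse.prod) ≤ sSup (specRad '' S) ^ n := by
  have hnonneg : ∀ B ∈ S, ∀ i j, 0 ≤ B i j := fun B hB i j => (hpos B hB i j).le
  have hL : ∀ M ∈ (List.ofFn A).reverse, M ∈ S := by simpa using hA
  rcases isEmpty_or_nonempty (Fin N) with _ | _
  · have hsup : 0 ≤ sSup (specRad '' S) := Real.sSup_nonneg <| by
      rintro _ ⟨B, -, rfl⟩
      exact Real.sSup_nonneg (by rintro _ ⟨μ, -, rfl⟩; exact norm_nonneg μ)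
    exact (specRad_le_of_mulVec_le (v := 0) isEmptyElim isEmptyElim le_rfl isEmptyElim).trans
      (pow_nonneg hsup n)
  obtain ⟨B, hB, t, ht, v, hv, hBv, hdom⟩ := hS.exists_pos_eigenvector_dominating hcomp hne hpos
  have hprod := Matrix.list_prod_mulVec_le_pow_smul ht _ fun M hM =>
    ⟨hnonneg M (hL M hM), hdom M (hL M hM)⟩
  rw [List.length_reverse, List.length_ofFn] at hprod
  calc specRad ((List.ofFn A).reverse.prod)
      ≤ t ^ n := specRad_le_of_mulVec_le
        (Matrix.list_prod_nonneg _ fun M hM => hnonneg M (hL M hM)) hv (pow_nonneg ht n) hprod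
    _ ≤ sSup (specRad '' S) ^ n := by
      refine pow_le_pow_left₀ ht ((le_specRad_of_mulVec_eq_smul ?_ hBv).trans
        (le_csSup (bddAbove_specRad_image hcomp hnonneg) ⟨B, hB, rfl⟩)) n
      exact fun h => (hv (Classical.arbitrary _)).ne' (congrFun h _)

theorem stmt_9 {N : ℕ} (S : Set (Matrix (Fin N) (Fin N) ℝ)) (hS : IsIRU S)
    (hcomp : IsCompact S) (hne : S.Nonempty) (hpos : ∀ A ∈ S, ∀ i j, 0 < A i j)
    (n : ℕ) (hn : 1 ≤ n) (A : Fin n → Matrix (Fin N) (Fin N) ℝ)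
    (hA : ∀ i, A i ∈ S) :
    specRad ((List.ofFn A).reverse.prod) ≤ sSup (specRad '' S) ^ n :=
  stmt_9_general S hS hcomp hne hpos n A hA
end

section
/- Let 𝒜 be a bounded set of nonnegative N×N matrices, n ≥ 1, and suppose each A_i (i = 1,…,n) is a finite convex combination of matrices from 𝒜. Then ‖A_n ⋯ A_1‖₁ ≥ (1/N)·inf{ρ(B_n⋯B_1) : B_1,…,B_n ∈ 𝒜}, where ‖M‖₁ is the operator norm induced by the ℓ¹ vector norm. -/
open Matrix

/-- Operator norm of a real square matrix induced by the `ℓ¹` vector norm: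
the maximum of the absolute column sums. -/
noncomputable def l1OpNorm {N : ℕ} (A : Matrix (Fin N) (Fin N) ℝ) : ℝ :=
  sSup {r : ℝ | ∃ j, r = ∑ i, |A i j|}

/-!
For a nonnegative matrix `B`, `ρ(B) ≤ ‖B‖₁ ≤ ‖Be‖₁`, and `‖Be‖₁` is the sum of all entries
of `B`, which is a linear function of `B`. Multiplying out the convex combinations exhibits
`A_n ⋯ A_1` as a convex combination of products `B_n ⋯ B_1` with `B_i ∈ 𝒜`, so its entry sum
is at least the infimum of `ρ(B_n ⋯ B_1)`. On the other hand the entry sum of any matrix is at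
most `N` times its largest absolute column sum.
-/

open Pointwise

theorem List.reverse_ofFn {α : Type*} {n : ℕ} (f : Fin n → α) :
    (List.ofFn f).reverse = List.ofFn (fun i => f i.rev) := by
  refine List.ext_getElem (by simp) fun i _ _ => ?_
  simp only [List.getElem_reverse, List.getElem_ofFn, List.length_ofFn, Fin.rev]
  congr 2
  omega

theorem Set.exists_reverse_ofFn_prod_eq_of_mem_pow {M : Type*} [Monoid M] {s : Set M} {n : ℕ}
    {x : M} (hx : x ∈ s ^ n) : ∃ B : Fin n → M, (∀ i, B i ∈ s) ∧ (List.ofFn B).reverse.prod = x := by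
  obtain ⟨f, rfl⟩ := Set.mem_pow.1 hx
  exact ⟨fun i => f i.rev, fun i => (f i.rev).2, by simp [List.reverse_ofFn]⟩

section ConvexHull

variable {𝕜 A : Type*} [CommSemiring 𝕜] [PartialOrder 𝕜] [Semiring A] [Algebra 𝕜 A]
  {s t : Set A}

theorem mul_mem_convexHull_mul {x y : A} (hx : x ∈ convexHull 𝕜 s) (hy : y ∈ convexHull 𝕜 t) :
    x * y ∈ convexHull 𝕜 (s * t) := by
  have hxy := (LinearMap.mulRight 𝕜 y).image_convexHull s ▸ Set.mem_image_of_mem _ hx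
  refine convexHull_min ?_ (convex_convexHull 𝕜 _) hxy
  rintro _ ⟨b, hb, rfl⟩
  have hby := (LinearMap.mulLeft 𝕜 b).image_convexHull t ▸ Set.mem_image_of_mem _ hy
  refine convexHull_mono ?_ hby
  rintro _ ⟨c, hc, rfl⟩
  exact Set.mul_mem_mul hb hc

theorem List.prod_mem_convexHull_pow {l : List A} (hl : ∀ x ∈ l, x ∈ convexHull 𝕜 s) :
    l.prod ∈ convexHull 𝕜 (s ^ l.length) := by
  induction l with
  | nil => exact subset_convexHull 𝕜 _ (by simp)
  | cons x l ih =>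
    rw [List.prod_cons, List.length_cons, pow_succ']
    exact mul_mem_convexHull_mul (hl x List.mem_cons_self)
      (ih fun y hy => hl y (List.mem_cons_of_mem x hy))

end ConvexHull

namespace Matrix

def nonnegSubmonoid (n R : Type*) [Fintype n] [DecidableEq n] [Semiring R] [PartialOrder R]
    [IsOrderedRing R] : Submonoid (Matrix n n R) where
  carrier := {M | ∀ i j, 0 ≤ M i j}
  mul_mem' hM hP i j := Finset.sum_nonneg fun k _ => mul_nonneg (hM i k) (hP k j)
  one_mem' i j := by
    rw [one_apply]
    split_ifs
    exacts [zero_le_one, le_rfl]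

section EntrySum

variable {m n : Type*} [Fintype m] [Fintype n] (R : Type*) [CommSemiring R]

def entrySum : Matrix m n R →ₗ[R] R :=
  ∑ i, ∑ j, entryLinearMap R R i j

variable {R}

theorem entrySum_apply (M : Matrix m n R) : entrySum R M = ∑ i, ∑ j, M i j := by
  simp [entrySum]

end EntrySum

end Matrix

section SquareMatrix

variable {N : ℕ}

theorem specRad_nonneg (A : Matrix (Fin N) (Fin N) ℝ) : 0 ≤ specRad A :=
  Real.sSup_nonneg <| by rintro _ ⟨μ, -, rfl⟩; exact norm_nonneg μ

theorem l1OpNorm_nonneg (A : Matrix (Fin N) (Fin N) ℝ) : 0 ≤ l1OpNorm A :=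
  Real.sSup_nonneg <| by rintro _ ⟨j, rfl⟩; exact Finset.sum_nonneg fun i _ => abs_nonneg _

theorem sum_abs_le_l1OpNorm (A : Matrix (Fin N) (Fin N) ℝ) (j : Fin N) :
    ∑ i, |A i j| ≤ l1OpNorm A := by
  refine le_csSup ((Set.finite_range fun j => ∑ i, |A i j|).bddAbove.mono ?_) ⟨j, rfl⟩
  rintro _ ⟨k, rfl⟩
  exact ⟨k, rfl⟩

attribute [local instance] Matrix.linftyOpNormedAddCommGroup in
theorem norm_le_l1OpNorm_of_isRoot_charpoly {A : Matrix (Fin N) (Fin N) ℝ} {μ : ℂ}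
    (hμ : (A.map Complex.ofReal).charpoly.IsRoot μ) : ‖μ‖ ≤ l1OpNorm A := by
  -- `Aᵀ` has the eigenvalues of `A`, and the `ℓ^∞` operator norm of `Aᵀ` is the largest
  -- absolute column sum of `A`.
  set D := (A.map Complex.ofReal)ᵀ
  have hD : Module.End.HasEigenvalue (toLin' D) μ := by
    rwa [Module.End.hasEigenvalue_iff_isRoot_charpoly, charpoly_toLin', charpoly_transpose]
  obtain ⟨v, hv⟩ := hD.exists_hasEigenvector
  have hDv : D *ᵥ v = μ • v := hv.apply_eq_smul
  have hDnorm : ‖D‖ ≤ l1OpNorm A := by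
    rw [linfty_opNorm_def, ← Real.coe_toNNReal _ (l1OpNorm_nonneg A), NNReal.coe_le_coe]
    refine Finset.sup_le fun j _ => ?_
    rw [← NNReal.coe_le_coe, Real.coe_toNNReal _ (l1OpNorm_nonneg A)]
    push_cast
    simpa [D, Complex.norm_real] using sum_abs_le_l1OpNorm A j
  refine le_of_mul_le_mul_right ?_ (norm_pos_iff.2 hv.2)
  calc ‖μ‖ * ‖v‖ = ‖D *ᵥ v‖ := by rw [hDv, norm_smul]
    _ ≤ ‖D‖ * ‖v‖ := linfty_opNorm_mulVec D v
    _ ≤ l1OpNorm A * ‖v‖ := by gcongr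

theorem specRad_le_l1OpNorm (A : Matrix (Fin N) (Fin N) ℝ) : specRad A ≤ l1OpNorm A :=
  Real.sSup_le (by rintro _ ⟨μ, hμ, rfl⟩; exact norm_le_l1OpNorm_of_isRoot_charpoly hμ)
    (l1OpNorm_nonneg A)

theorem l1OpNorm_le_entrySum {A : Matrix (Fin N) (Fin N) ℝ}
    (hA : A ∈ nonnegSubmonoid (Fin N) ℝ) : l1OpNorm A ≤ entrySum ℝ A := by
  rw [entrySum_apply]
  refine Real.sSup_le ?_ (Finset.sum_nonneg fun i _ => Finset.sum_nonneg fun j _ => hA i j)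
  rintro _ ⟨j, rfl⟩
  refine Finset.sum_le_sum fun i _ => ?_
  rw [abs_of_nonneg (hA i j)]
  exact Finset.single_le_sum (fun k _ => hA i k) (Finset.mem_univ j)

theorem entrySum_le_mul_l1OpNorm (A : Matrix (Fin N) (Fin N) ℝ) :
    entrySum ℝ A ≤ N * l1OpNorm A :=
  calc entrySum ℝ A = ∑ j, ∑ i, A i j := by rw [entrySum_apply, Finset.sum_comm]
    _ ≤ ∑ j, ∑ i, |A i j| := by gcongr; exact le_abs_self _
    _ ≤ ∑ _j : Fin N, l1OpNorm A := by gcongr with j; exact sum_abs_le_l1OpNorm A j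
    _ = N * l1OpNorm A := by simp

end SquareMatrix

theorem stmt_16_general {N : ℕ} (S : Set (Matrix (Fin N) (Fin N) ℝ))
    (hnn : ∀ B ∈ S, ∀ i j, 0 ≤ B i j)
    (n : ℕ) (A : Fin n → Matrix (Fin N) (Fin N) ℝ)
    (hA : ∀ i, A i ∈ convexHull ℝ S) :
    (1 / (N : ℝ)) *
        sInf {r : ℝ | ∃ B : Fin n → Matrix (Fin N) (Fin N) ℝ,
          (∀ i, B i ∈ S) ∧ r = specRad ((List.ofFn B).reverse.prod)}
      ≤ l1OpNorm ((List.ofFn A).reverse.prod) := by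
  set c := sInf {r : ℝ | ∃ B : Fin n → Matrix (Fin N) (Fin N) ℝ,
    (∀ i, B i ∈ S) ∧ r = specRad ((List.ofFn B).reverse.prod)}
  have hS : S ⊆ nonnegSubmonoid (Fin N) ℝ := hnn
  have hprod : (List.ofFn A).reverse.prod ∈ convexHull ℝ (S ^ n) := by
    simpa using List.prod_mem_convexHull_pow (l := (List.ofFn A).reverse) (by simpa using hA)
  have hc : c ≤ entrySum ℝ (List.ofFn A).reverse.prod := by
    refine convexHull_min (fun Q hQ => ?_) (convex_halfSpace_ge (entrySum ℝ).isLinear c) hprod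
    obtain ⟨B, hB, rfl⟩ := Set.exists_reverse_ofFn_prod_eq_of_mem_pow hQ
    calc c ≤ specRad (List.ofFn B).reverse.prod :=
          csInf_le ⟨0, by rintro _ ⟨B, -, rfl⟩; exact specRad_nonneg _⟩ ⟨B, hB, rfl⟩
      _ ≤ l1OpNorm (List.ofFn B).reverse.prod := specRad_le_l1OpNorm _
      _ ≤ entrySum ℝ (List.ofFn B).reverse.prod :=
          l1OpNorm_le_entrySum (Submonoid.pow_subset hS hQ)
  rcases N.eq_zero_or_pos with rfl | hN
  · simpa using l1OpNorm_nonneg _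
  · rw [one_div, inv_mul_le_iff₀ (by exact_mod_cast hN)]
    exact hc.trans (entrySum_le_mul_l1OpNorm _)

theorem stmt_16 {N : ℕ} (hN : 0 < N) (S : Set (Matrix (Fin N) (Fin N) ℝ))
    (hb : ∃ C, ∀ B ∈ S, ∀ i j, |B i j| ≤ C)
    (hnn : ∀ B ∈ S, ∀ i j, 0 ≤ B i j)
    (n : ℕ) (hn : 1 ≤ n) (A : Fin n → Matrix (Fin N) (Fin N) ℝ)
    (hA : ∀ i, A i ∈ convexHull ℝ S) :
    (1 / (N : ℝ)) *
        sInf {r : ℝ | ∃ B : Fin n → Matrix (Fin N) (Fin N) ℝ,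
          (∀ i, B i ∈ S) ∧ r = specRad ((List.ofFn B).reverse.prod)}
      ≤ l1OpNorm ((List.ofFn A).reverse.prod) :=
  stmt_16_general S hnn n A hA
end
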